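/- The following derivation-system fact underlying the PCP reduction holds: in the inductive system with axioms G(G_{s_i}(Pr), G_{t_i}(Pr)) for i=1,…,n and closure rule 'G(u,v) derivable implies G(G_{s_i}(u), G_{t_i}(v)) derivable', a term of the form G(g, g) (same argument twice) is derivable if and only if there exist k ≥ 1 and indices i₁,…,i_k such that g = G_{s_{i₁}}(G_{s_{i₂}}(… G_{s_{i_k}}(Pr)…)) and g = G_{t_{i₁}}(G_{t_{i₂}}(… G_{t_{i_k}}(Pr)…)), which happens iff s_{i₁}·…·s_{i_k} = t_{i₁}·…·t_{i_k}. -/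

import Mathlib

/- Terms freely generated by a constant `pr`, one unary constructor `gs σ` per symbol `σ`
of the alphabet, and a binary constructor `G`. -/
inductive Tm (σ : Type) where
  | pr : Tm σ
  | gs : σ → Tm σ → Tm σ
  | G : Tm σ → Tm σ → Tm σ

/-- `Gstr s u` is the composition `G_{σ₁}(…(G_{σ_m}(u))…)` for the string `s = σ₁…σ_m`. -/
def Gstr {σ : Type} : List σ → Tm σ → Tm σ
  | [], u => u
  | a :: s, u => Tm.gs a (Gstr s u)

/-- The derivation system with axioms `G(G_{sᵢ}(Pr), G_{tᵢ}(Pr))` and closure rule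
"from `G(u, v)` derive `G(G_{sᵢ}(u), G_{tᵢ}(v))`", for each pair `(sᵢ, tᵢ)`. -/
inductive Deriv {σ : Type} (pairs : List (List σ × List σ)) : Tm σ → Prop
  | ax {s t : List σ} : (s, t) ∈ pairs → Deriv pairs (Tm.G (Gstr s Tm.pr) (Gstr t Tm.pr))
  | step {s t : List σ} {u v : Tm σ} : (s, t) ∈ pairs → Deriv pairs (Tm.G u v) →
      Deriv pairs (Tm.G (Gstr s u) (Gstr t v))

/-! Induction on derivations shows that the derivable terms are exactly
`G(G_{s_{i₁}⋯s_{i_k}}(Pr), G_{t_{i₁}⋯t_{i_k}}(Pr))` for nonempty sequences of pairs. On the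
diagonal, injectivity of `s ↦ G_s(Pr)` turns the two equations for `g` into equality of the
two concatenations. -/

section

variable {σ : Type} {pairs : List (List σ × List σ)}

theorem Gstr_append (s t : List σ) (u : Tm σ) : Gstr (s ++ t) u = Gstr s (Gstr t u) := by
  induction s with
  | nil => rfl
  | cons a s ih => rw [List.cons_append, Gstr, Gstr, ih]

theorem Gstr_pr_injective : Function.Injective fun s : List σ => Gstr s Tm.pr := by
  intro s t h
  induction s generalizing t with
  | nil => cases t with
    | nil => rfl
    | cons b t => simp [Gstr] at h
  | cons a s ih =>
    cases t with
    | nil => simp [Gstr] at h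
    | cons b t =>
      obtain ⟨rfl, hst⟩ := Tm.gs.inj h
      rw [ih hst]

theorem deriv_cons {p : List σ × List σ}
    {l : List (List σ × List σ)} (hp : p ∈ pairs) (hl : ∀ q ∈ l, q ∈ pairs) :
    Deriv pairs (Tm.G (Gstr ((p :: l).map Prod.fst).flatten Tm.pr)
      (Gstr ((p :: l).map Prod.snd).flatten Tm.pr)) := by
  induction l generalizing p with
  | nil => simpa using Deriv.ax hp
  | cons q l ih =>
    rw [List.forall_mem_cons] at hl
    simpa [Gstr_append] using Deriv.step hp (ih hl.1 hl.2)

theorem deriv_iff_exists_list {w : Tm σ} :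
    Deriv pairs w ↔ ∃ l : List (List σ × List σ), l ≠ [] ∧ (∀ p ∈ l, p ∈ pairs) ∧
      w = Tm.G (Gstr (l.map Prod.fst).flatten Tm.pr) (Gstr (l.map Prod.snd).flatten Tm.pr) := by
  constructor
  · intro h
    induction h with
    | @ax s t hst => exact ⟨[(s, t)], List.cons_ne_nil _ _, by simpa using hst, by simp⟩
    | @step s t u v hst _ ih =>
      obtain ⟨l, -, hmem, huv⟩ := ih
      obtain ⟨rfl, rfl⟩ := Tm.G.inj huv
      exact ⟨(s, t) :: l, List.cons_ne_nil _ _, List.forall_mem_cons.2 ⟨hst, hmem⟩,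
        by simp [Gstr_append]⟩
  · rintro ⟨_ | ⟨p, l⟩, hne, hmem, rfl⟩
    · exact absurd rfl hne
    · rw [List.forall_mem_cons] at hmem
      exact deriv_cons hmem.1 hmem.2

end

/-- A term of the form `G(g, g)` is derivable iff there is a nonempty sequence of pairs
`(s_{i₁}, t_{i₁}), …, (s_{i_k}, t_{i_k})` from the system such that
`g = G_{s_{i₁}}(… G_{s_{i_k}}(Pr) …)` and `g = G_{t_{i₁}}(… G_{t_{i_k}}(Pr) …)`,
which happens iff the two concatenations `s_{i₁}·…·s_{i_k}` and `t_{i₁}·…·t_{i_k}` are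
equal (and `g` is the term built from the common concatenation). -/
theorem deriv_diag_iff {σ : Type} (pairs : List (List σ × List σ)) (g : Tm σ) :
    (Deriv pairs (Tm.G g g) ↔
      (∃ l : List (List σ × List σ), l ≠ [] ∧ (∀ p ∈ l, p ∈ pairs) ∧
        g = Gstr (l.map Prod.fst).flatten Tm.pr ∧ g = Gstr (l.map Prod.snd).flatten Tm.pr)) ∧
    ((∃ l : List (List σ × List σ), l ≠ [] ∧ (∀ p ∈ l, p ∈ pairs) ∧
        g = Gstr (l.map Prod.fst).flatten Tm.pr ∧ g = Gstr (l.map Prod.snd).flatten Tm.pr) ↔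
      (∃ l : List (List σ × List σ), l ≠ [] ∧ (∀ p ∈ l, p ∈ pairs) ∧
        (l.map Prod.fst).flatten = (l.map Prod.snd).flatten ∧
        g = Gstr (l.map Prod.fst).flatten Tm.pr)) := by
  refine ⟨?_, ⟨?_, ?_⟩⟩
  · simp only [deriv_iff_exists_list, Tm.G.injEq]
  · rintro ⟨l, hne, hmem, hfst, hsnd⟩
    exact ⟨l, hne, hmem, Gstr_pr_injective (hfst.symm.trans hsnd), hfst⟩
  · rintro ⟨l, hne, hmem, hword, hg⟩
    exact ⟨l, hne, hmem, hg, hword ▸ hg⟩
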